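/- (Andréief's identity in the shuffle algebra.) Let d ≥ 1 and consider the shuffle algebra on the alphabet of 2d letters {1,…,d} ∪ {1',…,d'}. Let M be the d×d matrix whose (i,j) entry is the two-letter word i j'. Then det_⧢(M) = Σ_{σ,τ∈S_d} sign(σ)sign(τ) · [ σ(1)τ(1)' ≻ σ(2)τ(2)' ≻ ⋯ ≻ σ(d)τ(d)' ], where on the right each σ(i)τ(i)' is a two-letter word and the iterated right half-shuffle products are bracketed from the left. -/

import Mathlib

open scoped BigOperators

namespace ShufflePaper

variable {α : Type*}

/-- All shuffles (interleavings) of two words, with multiplicity. -/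
def shuffles : List α → List α → Multiset (List α)
  | [], ys => {ys}
  | x :: xs, [] => {x :: xs}
  | x :: xs, y :: ys =>
      ((shuffles xs (y :: ys)).map (x :: ·)) + ((shuffles (x :: xs) ys).map (y :: ·))
  termination_by l₁ l₂ => l₁.length + l₂.length

/-- The element of the shuffle algebra corresponding to a multiset of words. -/
noncomputable def ofMS (m : Multiset (List α)) : List α →₀ ℝ :=
  (m.map fun l => Finsupp.single l (1 : ℝ)).sum

/-- The shuffle product on the shuffle algebra `T(ℝ^d)` (bilinear extension). -/
noncomputable def sh (x y : List α →₀ ℝ) : List α →₀ ℝ :=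
  x.sum fun v a => y.sum fun w b => (a * b) • ofMS (shuffles v w)

/-- Iterated shuffle product of a list of elements (empty word is the unit). -/
noncomputable def shProd : List (List α →₀ ℝ) → (List α →₀ ℝ)
  | [] => Finsupp.single [] 1
  | x :: xs => sh x (shProd xs)

/-- Determinant in the commutative ring `(T(ℝ^d), ⧢)` via the Leibniz formula. -/
noncomputable def detSh {n : ℕ} (M : Fin n → Fin n → (List α →₀ ℝ)) : List α →₀ ℝ :=
  ∑ σ : Equiv.Perm (Fin n), (Equiv.Perm.sign σ : ℤ) •
    shProd ((List.finRange n).map fun i => M (σ i) i)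

/-- The matrix `W_d` whose `(i,j)` entry is the two-letter word `ij`. -/
noncomputable def W (d : ℕ) : Fin d → Fin d → (List (Fin d) →₀ ℝ) :=
  fun i j => Finsupp.single [i, j] 1

/-- `inv(t_{1,d}) = Σ_σ sign(σ) σ(1)⋯σ(d)`. -/
noncomputable def invT1 (d : ℕ) : List (Fin d) →₀ ℝ :=
  ∑ σ : Equiv.Perm (Fin d), (Equiv.Perm.sign σ : ℤ) •
    Finsupp.single ((List.finRange d).map σ) 1

/-- `inv(t_{2,d}) = Σ_{σ,τ} sign(σ)sign(τ) σ(1)τ(1)⋯σ(d)τ(d)`. -/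
noncomputable def invT2 (d : ℕ) : List (Fin d) →₀ ℝ :=
  ∑ σ : Equiv.Perm (Fin d), ∑ τ : Equiv.Perm (Fin d),
    ((Equiv.Perm.sign σ : ℤ) * (Equiv.Perm.sign τ : ℤ)) •
      Finsupp.single ((List.finRange d).flatMap fun i => [σ i, τ i]) 1

/- Right half-shuffle of two words: `u ≻ (v·i) = (u ⧢ v)·i`; zero if the
second word is empty. -/
open Classical in
noncomputable def hsW (u w : List α) : List α →₀ ℝ :=
  if h : w = [] then 0
  else ofMS ((shuffles u w.dropLast).map fun l => l ++ [w.getLast h])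

/-- Right half-shuffle product (bilinear extension). -/
noncomputable def hs (x y : List α →₀ ℝ) : List α →₀ ℝ :=
  x.sum fun v a => y.sum fun w b => (a * b) • hsW v w

/-- Iterated right half-shuffle of a list of words, bracketed from the left. -/
noncomputable def hsList : List (List α) → (List α →₀ ℝ)
  | [] => 0
  | w :: ws => ws.foldl (fun acc u => hs acc (Finsupp.single u 1)) (Finsupp.single w 1)

/-- Action of `σ ∈ S_n` on the span of words, permuting letter positions of
words of length `n` (letter in position `σ(k)` of `σ·w` is `w_k`); words of
other lengths are left untouched. -/
noncomputable def permAct {d : ℕ} (n : ℕ) (σ : Equiv.Perm (Fin n))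
    (x : List (Fin d) →₀ ℝ) : List (Fin d) →₀ ℝ :=
  x.sum fun w a =>
    if h : w.length = n then
      Finsupp.single (List.ofFn fun p : Fin n => w.get (Fin.cast h.symm (σ⁻¹ p))) a
    else Finsupp.single w a

/-- The subgroup `H ≤ S_{2d}` generated by the transpositions `(2i−1, 2i+1)` and
`(2i, 2i+2)`, `1 ≤ i ≤ d−1` (0-indexed: all swaps `(k, k+2)` with `k+2 < 2d`). -/
def Hgrp (d : ℕ) : Subgroup (Equiv.Perm (Fin (2 * d))) :=
  Subgroup.closure
    {g | ∃ k : ℕ, ∃ hk : k + 2 < 2 * d, g = Equiv.swap ⟨k, by omega⟩ ⟨k + 2, hk⟩}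

/-- Pfaffian in the shuffle algebra, via the sum over permutations. -/
noncomputable def pfSh {n : ℕ} (A : Fin n → Fin n → (List α →₀ ℝ)) : List α →₀ ℝ :=
  ((2 ^ (n / 2) * (n / 2).factorial : ℝ))⁻¹ •
    ∑ π : Equiv.Perm (Fin n), (Equiv.Perm.sign π : ℤ) •
      shProd ((List.finRange (n / 2)).map fun i : Fin (n / 2) =>
        A (π ⟨2 * (i : ℕ), by have := i.isLt; omega⟩)
          (π ⟨2 * (i : ℕ) + 1, by have := i.isLt; omega⟩))

/-- The matrix `Z_d` from de Bruijn's formula, odd case. -/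
noncomputable def Z (d : ℕ) : Fin (d + 1) → Fin (d + 1) → (List (Fin d) →₀ ℝ) :=
  fun i j =>
    if hi : (i : ℕ) < d then
      if hj : (j : ℕ) < d then
        Finsupp.single [⟨i, hi⟩, ⟨j, hj⟩] 1 - Finsupp.single [⟨j, hj⟩, ⟨i, hi⟩] 1
      else Finsupp.single [⟨i, hi⟩] 1
    else if hj : (j : ℕ) < d then -Finsupp.single [⟨j, hj⟩] 1
    else 0

/-!
On words, `u ⧢ v = u ≻ v + v ≻ u` unless both are empty, and associativity of `⧢` gives
`x ≻ (y ≻ z) = (x ⧢ y) ≻ z`. Together they show that shuffling a non-empty word `x` into a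
left-bracketed half-shuffle `w₁ ≻ ⋯ ≻ wₖ` gives the sum of the `k + 1` left-bracketed
half-shuffles with `x` inserted at every position, so by induction a shuffle product of `n`
non-empty words is `∑_ρ w_{ρ 1} ≻ ⋯ ≻ w_{ρ n}`. Applying this to each Leibniz term
`∏ᵢ σ(i) i'` and substituting `σ ↦ σρ` gives Andréief's identity.
-/

open Finsupp

theorem shuffles_nil_left (v : List α) : shuffles [] v = {v} := by
  cases v <;> simp [shuffles]

theorem shuffles_nil_right (u : List α) : shuffles u [] = {u} := by
  cases u <;> simp [shuffles]

theorem shuffles_comm : (u v : List α) → shuffles u v = shuffles v u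
  | [], v => by rw [shuffles_nil_left, shuffles_nil_right]
  | x :: xs, [] => by rw [shuffles_nil_left, shuffles_nil_right]
  | x :: xs, y :: ys => by
      rw [shuffles, shuffles, shuffles_comm xs (y :: ys), shuffles_comm (x :: xs) ys, add_comm]
  termination_by u v => u.length + v.length

theorem shuffles_append_singleton : (u v : List α) → (a b : α) →
    shuffles (u ++ [a]) (v ++ [b]) =
      (shuffles (u ++ [a]) v).map (· ++ [b]) + (shuffles u (v ++ [b])).map (· ++ [a])
  | [], [], a, b => by simp [shuffles]
  | [], y :: v, a, b => by
      have h := shuffles_append_singleton [] v a b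
      simp only [List.nil_append, List.cons_append, shuffles, shuffles_nil_left] at *
      simp [h, Multiset.map_map]
  | x :: u, [], a, b => by
      have h := shuffles_append_singleton u [] a b
      simp only [List.nil_append, List.cons_append, shuffles, shuffles_nil_right] at *
      simp [h, Multiset.map_map]
  | x :: u, y :: v, a, b => by
      have h₁ := shuffles_append_singleton u (y :: v) a b
      have h₂ := shuffles_append_singleton (x :: u) v a b
      simp only [List.cons_append, shuffles] at *
      simp only [h₁, h₂, Multiset.map_add, Multiset.map_map, Function.comp_def,
        List.cons_append]
      abel
  termination_by u v => u.length + v.length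

theorem shuffles_assoc : (u v w : List α) →
    (shuffles u v).bind (shuffles · w) = (shuffles v w).bind (shuffles u)
  | [], v, w => by simpa [shuffles_nil_left] using (Multiset.bind_singleton _ id).symm
  | x :: u, [], w => by simp [shuffles_nil_left, shuffles_nil_right]
  | x :: u, y :: v, [] => by simpa [shuffles_nil_right] using Multiset.bind_singleton _ id
  | x :: u, y :: v, z :: w => by
      calc (shuffles (x :: u) (y :: v)).bind (shuffles · (z :: w))
          = ((shuffles u (y :: v)).bind (shuffles · (z :: w))).map (x :: ·)
            + ((shuffles (x :: u) v).bind (shuffles · (z :: w))).map (y :: ·)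
            + ((shuffles (x :: u) (y :: v)).bind (shuffles · w)).map (z :: ·) := by
              simp only [shuffles, Multiset.add_bind, Multiset.bind_add, Multiset.bind_map,
                Multiset.map_bind, Multiset.map_add]
              abel
        _ = ((shuffles (y :: v) (z :: w)).bind (shuffles u)).map (x :: ·)
            + ((shuffles v (z :: w)).bind (shuffles (x :: u))).map (y :: ·)
            + ((shuffles (y :: v) w).bind (shuffles (x :: u))).map (z :: ·) := by
              rw [shuffles_assoc u, shuffles_assoc (x :: u) v, shuffles_assoc (x :: u) (y :: v)]
        _ = (shuffles (y :: v) (z :: w)).bind (shuffles (x :: u)) := by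
              simp only [shuffles, Multiset.add_bind, Multiset.bind_add, Multiset.bind_map,
                Multiset.map_bind, Multiset.map_add]
              abel
  termination_by u v w => u.length + v.length + w.length

@[simp] theorem ofMS_add (m n : Multiset (List α)) : ofMS (m + n) = ofMS m + ofMS n := by
  simp [ofMS]

@[simp] theorem ofMS_singleton (l : List α) : ofMS {l} = single l 1 := by simp [ofMS]

theorem ofMS_bind {β : Type*} (m : Multiset β) (f : β → Multiset (List α)) :
    ofMS (m.bind f) = (m.map fun b => ofMS (f b)).sum := by
  simp [ofMS, Multiset.map_bind, Multiset.sum_bind]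

theorem map_ofMS {F N : Type*} [AddCommMonoid N] [FunLike F (List α →₀ ℝ) N]
    [AddMonoidHomClass F (List α →₀ ℝ) N] (φ : F) (m : Multiset (List α)) :
    φ (ofMS m) = (m.map fun l => φ (single l 1)).sum := by
  simp [ofMS, map_multiset_sum, Multiset.map_map]

theorem hsW_nil_right (u : List α) : hsW u [] = 0 := by simp [hsW]

theorem hsW_append_singleton (u v : List α) (b : α) :
    hsW u (v ++ [b]) = ofMS ((shuffles u v).map (· ++ [b])) := by simp [hsW]

theorem hsW_nil_left {w : List α} (hw : w ≠ []) : hsW [] w = single w 1 := by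
  obtain ⟨v, b, rfl⟩ := List.eq_nil_or_concat' w |>.resolve_left hw
  simp [hsW_append_singleton, shuffles_nil_left]

theorem ofMS_shuffles_eq_hsW_add_hsW {u : List α} (hu : u ≠ []) (v : List α) :
    ofMS (shuffles u v) = hsW u v + hsW v u := by
  obtain ⟨u, a, rfl⟩ := List.eq_nil_or_concat' u |>.resolve_left hu
  rcases List.eq_nil_or_concat' v with rfl | ⟨v, b, rfl⟩
  · simp [shuffles_nil_right, hsW_nil_right, hsW_nil_left]
  · rw [shuffles_append_singleton, hsW_append_singleton, hsW_append_singleton,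
      shuffles_comm u, ofMS_add]

noncomputable def bilinExt (F : List α → List α → (List α →₀ ℝ)) :
    (List α →₀ ℝ) →ₗ[ℝ] (List α →₀ ℝ) →ₗ[ℝ] (List α →₀ ℝ) :=
  linearCombination ℝ fun v => linearCombination ℝ (F v)

theorem bilinExt_apply (F : List α → List α → (List α →₀ ℝ)) (x y : List α →₀ ℝ) :
    bilinExt F x y = x.sum fun v a => y.sum fun w b => (a * b) • F v w := by
  simp [bilinExt, linearCombination_apply, Finsupp.sum, Finset.smul_sum, mul_smul]

theorem bilinExt_single_single (F : List α → List α → (List α →₀ ℝ)) (u v : List α) :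
    bilinExt F (single u 1) (single v 1) = F u v := by
  simp [bilinExt]

noncomputable def shuffleₗ : (List α →₀ ℝ) →ₗ[ℝ] (List α →₀ ℝ) →ₗ[ℝ] (List α →₀ ℝ) :=
  bilinExt fun u v => ofMS (shuffles u v)

noncomputable def halfShuffleₗ : (List α →₀ ℝ) →ₗ[ℝ] (List α →₀ ℝ) →ₗ[ℝ] (List α →₀ ℝ) :=
  bilinExt hsW

local infixl:70 " ⧢ " => shuffleₗ

local infixl:70 " ≻ " => halfShuffleₗ

theorem sh_eq_shuffleₗ (x y : List α →₀ ℝ) : sh x y = x ⧢ y := (bilinExt_apply _ x y).symm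

theorem hs_eq_halfShuffleₗ (x y : List α →₀ ℝ) : hs x y = x ≻ y := (bilinExt_apply _ x y).symm

theorem single_shuffle_single (u v : List α) :
    single u 1 ⧢ single v 1 = ofMS (shuffles u v) := bilinExt_single_single _ u v

theorem single_halfShuffle_single (u v : List α) :
    single u 1 ≻ single v 1 = hsW u v := bilinExt_single_single _ u v

theorem ofMS_halfShuffle (m : Multiset (List α)) (Z : List α →₀ ℝ) :
    ofMS m ≻ Z = (m.map fun l => single l 1 ≻ Z).sum := by
  simpa using map_ofMS (halfShuffleₗ.flip Z) m

theorem single_shuffle_eq_halfShuffle_add_halfShuffle {u : List α} (hu : u ≠ [])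
    (Y : List α →₀ ℝ) :
    single u 1 ⧢ Y = single u 1 ≻ Y + Y ≻ single u 1 := by
  induction Y using Finsupp.induction_linear with
  | zero => simp
  | add Y₁ Y₂ h₁ h₂ => simp only [map_add, LinearMap.add_apply, h₁, h₂]; abel
  | single v b =>
      rw [← smul_single_one v b]
      simp only [map_smul, LinearMap.smul_apply, single_shuffle_single, single_halfShuffle_single,
        ofMS_shuffles_eq_hsW_add_hsW hu, smul_add]

theorem single_halfShuffle_halfShuffle_single (x y z : List α) :
    single x 1 ≻ (single y 1 ≻ single z 1) = (single x 1 ⧢ single y 1) ≻ single z 1 := by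
  rw [single_halfShuffle_single, single_shuffle_single, ofMS_halfShuffle]
  rcases List.eq_nil_or_concat' z with rfl | ⟨z, b, rfl⟩
  · simp [hsW_nil_right, single_halfShuffle_single]
  · simp only [hsW_append_singleton, map_ofMS, Multiset.map_map, Function.comp_apply,
      single_halfShuffle_single, ← ofMS_bind, ← Multiset.map_bind, shuffles_assoc]

theorem halfShuffle_halfShuffle (X Y Z : List α →₀ ℝ) : X ≻ (Y ≻ Z) = (X ⧢ Y) ≻ Z := by
  induction X using Finsupp.induction_linear with
  | zero => simp
  | add X₁ X₂ h₁ h₂ => simp only [map_add, LinearMap.add_apply, h₁, h₂]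
  | single x a =>
  induction Y using Finsupp.induction_linear with
  | zero => simp
  | add Y₁ Y₂ h₁ h₂ => simp only [map_add, LinearMap.add_apply, h₁, h₂]
  | single y b =>
  induction Z using Finsupp.induction_linear with
  | zero => simp
  | add Z₁ Z₂ h₁ h₂ => simp only [map_add, h₁, h₂]
  | single z c =>
      rw [← smul_single_one x a, ← smul_single_one y b, ← smul_single_one z c]
      simp only [map_smul, LinearMap.smul_apply, single_halfShuffle_halfShuffle_single]

theorem shProd_cons (x : List α →₀ ℝ) (xs : List (List α →₀ ℝ)) :
    shProd (x :: xs) = x ⧢ shProd xs := sh_eq_shuffleₗ _ _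

theorem hsList_append_singleton {L : List (List α)} (hL : L ≠ []) (z : List α) :
    hsList (L ++ [z]) = hsList L ≻ single z 1 := by
  obtain ⟨w, ws, rfl⟩ := List.exists_cons_of_ne_nil hL
  simp [hsList, List.foldl_append, hs_eq_halfShuffleₗ]

theorem _root_.List.insertIdx_append_singleton {β : Type*} {L : List β} {i : ℕ}
    (h : i ≤ L.length) (x z : β) : (L ++ [z]).insertIdx i x = L.insertIdx i x ++ [z] := by
  induction L generalizing i with
  | nil => simp [Nat.le_zero.mp h]
  | cons a L ih =>
      cases i with
      | zero => simp
      | succ i => simp [ih (Nat.le_of_succ_le_succ h)]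

theorem single_shuffle_hsList {x : List α} (hx : x ≠ []) {L : List (List α)} (hL : L ≠ []) :
    single x 1 ⧢ hsList L = ∑ i ∈ Finset.range (L.length + 1), hsList (L.insertIdx i x) := by
  induction L using List.reverseRecOn with
  | nil => exact absurd rfl hL
  | append_singleton M z ih =>
    rcases eq_or_ne M [] with rfl | hM
    · simp [Finset.sum_range_succ, hsList, hs_eq_halfShuffleₗ,
        single_shuffle_eq_halfShuffle_add_halfShuffle hx]
    · have hlen : (M ++ [z]).length = M.length + 1 := by simp
      calc single x 1 ⧢ hsList (M ++ [z])
          = (single x 1 ⧢ hsList M) ≻ single z 1 + hsList (M ++ [z] ++ [x]) := by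
            rw [single_shuffle_eq_halfShuffle_add_halfShuffle hx, hsList_append_singleton hM,
              halfShuffle_halfShuffle, hsList_append_singleton (by simp),
              hsList_append_singleton hM]
        _ = ∑ i ∈ Finset.range (M.length + 1), hsList ((M ++ [z]).insertIdx i x)
            + hsList ((M ++ [z]).insertIdx (M.length + 1) x) := by
            rw [ih hM, map_sum, LinearMap.sum_apply]
            congr 1
            · refine Finset.sum_congr rfl fun i hi => ?_
              have hi : i ≤ M.length := Nat.lt_succ_iff.mp (Finset.mem_range.mp hi)
              rw [List.insertIdx_append_singleton hi, hsList_append_singleton]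
              exact List.ne_nil_of_length_pos (by simp [List.length_insertIdx_of_le_length hi])
            · rw [← hlen, List.insertIdx_length_self]
        _ = _ := by rw [hlen, Finset.sum_range_succ _ (M.length + 1)]

theorem _root_.List.ofFn_insertNth {β : Type*} {n : ℕ} (i : Fin (n + 1)) (x : β)
    (p : Fin n → β) :
    List.ofFn (Fin.insertNth i x p) = (List.ofFn p).insertIdx i x := by
  induction n with
  | zero => simp [Fin.fin_one_eq_zero i, Fin.insertNth_zero']
  | succ n ih =>
      cases i using Fin.cases with
      | zero => simp [Fin.insertNth_zero']
      | succ i =>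
          rw [← Fin.cons_self_tail p, Fin.insertNth_succ_cons, List.ofFn_cons, List.ofFn_cons, ih,
            Fin.val_succ, List.insertIdx_succ_cons]

open Equiv

/-- The permutation of `Fin (n + 1)` sending `i` to `0` and `i.succAbove j` to `(σ j).succ`. -/
def insertPerm {n : ℕ} (σ : Perm (Fin n)) (i : Fin (n + 1)) : Perm (Fin (n + 1)) :=
  Perm.decomposeFin.symm (0, σ) * i.cycleRange

theorem insertPerm_apply_self {n : ℕ} (σ : Perm (Fin n)) (i : Fin (n + 1)) :
    insertPerm σ i i = 0 := by
  simp [insertPerm, Fin.cycleRange_self]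

theorem comp_insertPerm {β : Type*} {n : ℕ} (g : Fin (n + 1) → β) (σ : Perm (Fin n))
    (i : Fin (n + 1)) : g ∘ insertPerm σ i = Fin.insertNth i (g 0) (g ∘ Fin.succ ∘ σ) := by
  funext k
  cases k using Fin.succAboveCases i with
  | x => simp [insertPerm_apply_self]
  | p j => simp [insertPerm, Fin.cycleRange_succAbove]

theorem insertPerm_bijective {n : ℕ} :
    Function.Bijective fun p : Perm (Fin n) × Fin (n + 1) => insertPerm p.1 p.2 := by
  refine (Fintype.bijective_iff_injective_and_card _).mpr
    ⟨?_, by simp [Fintype.card_perm, Nat.factorial_succ, mul_comm]⟩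
  rintro ⟨σ, i⟩ ⟨σ', i'⟩ h
  obtain rfl : i = i' := (insertPerm σ' i').injective <| by
    rw [insertPerm_apply_self, ← insertPerm_apply_self σ i]; exact (congrArg (· i) h).symm
  have hσ := Perm.decomposeFin.symm.injective
    (mul_right_cancel (h : insertPerm σ i = insertPerm σ' i))
  simp_all

theorem shProd_eq_sum_hsList {n : ℕ} (g : Fin (n + 1) → List α) (hg : ∀ j, g j ≠ []) :
    shProd (List.ofFn fun j => single (g j) 1) =
      ∑ ρ : Perm (Fin (n + 1)), hsList (List.ofFn (g ∘ ρ)) := by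
  induction n with
  | zero =>
      simp [shProd_cons, shProd, single_shuffle_single, shuffles_nil_right, hsList]
  | succ n ih =>
      have hstep (σ : Perm (Fin (n + 1))) :
          single (g 0) 1 ⧢ hsList (List.ofFn (g ∘ Fin.succ ∘ σ)) =
            ∑ i : Fin (n + 2), hsList (List.ofFn (g ∘ insertPerm σ i)) := by
        rw [single_shuffle_hsList (hg 0) (by simp), List.length_ofFn,
          ← Fin.sum_univ_eq_sum_range]
        simp only [comp_insertPerm, List.ofFn_insertNth]
      have ih' : shProd (List.ofFn fun j => single (g j.succ) 1) = _ :=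
        ih (g ∘ Fin.succ) fun j => hg j.succ
      rw [List.ofFn_succ, shProd_cons, ih', map_sum]
      simp only [Function.comp_assoc, hstep]
      rw [← Fintype.sum_prod_type']
      exact Fintype.sum_bijective _ insertPerm_bijective _ _ fun _ => rfl

/-- Andréief's identity in the shuffle algebra on the alphabet
`{1,…,d} ∪ {1',…,d'}` (modelled as `Fin d ⊕ Fin d`). -/
theorem andreief (d : ℕ) (hd : 1 ≤ d) :
    detSh (fun i j : Fin d =>
        Finsupp.single [Sum.inl i, Sum.inr j] (1 : ℝ)) =
      ∑ σ : Equiv.Perm (Fin d), ∑ τ : Equiv.Perm (Fin d),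
        ((Equiv.Perm.sign σ : ℤ) * (Equiv.Perm.sign τ : ℤ)) •
          hsList ((List.finRange d).map fun i =>
            ([Sum.inl (σ i), Sum.inr (τ i)] : List (Fin d ⊕ Fin d))) := by
  obtain ⟨n, rfl⟩ : ∃ n, d = n + 1 := ⟨d - 1, by omega⟩
  let word (σ τ : Perm (Fin (n + 1))) (k : Fin (n + 1)) : List (Fin (n + 1) ⊕ Fin (n + 1)) :=
    [Sum.inl (σ k), Sum.inr (τ k)]
  calc _ = ∑ σ : Perm (Fin (n + 1)), (Perm.sign σ : ℤ) •
        ∑ ρ : Perm (Fin (n + 1)), hsList (List.ofFn (word (σ * ρ) ρ)) := by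
        refine Finset.sum_congr rfl fun σ _ => ?_
        rw [← List.ofFn_eq_map]
        exact congrArg _ (shProd_eq_sum_hsList (word σ 1) (by simp [word]))
    _ = ∑ ρ : Perm (Fin (n + 1)), ∑ σ : Perm (Fin (n + 1)),
        ((Perm.sign σ : ℤ) * (Perm.sign ρ : ℤ)) • hsList (List.ofFn (word σ ρ)) := by
        simp only [Finset.smul_sum]
        rw [Finset.sum_comm]
        refine Finset.sum_congr rfl fun ρ _ =>
          Fintype.sum_equiv (Equiv.mulRight ρ) _ _ fun σ => ?_
        simp [Perm.sign_mul, mul_assoc]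
    _ = _ := by
        rw [Finset.sum_comm]
        simp only [List.ofFn_eq_map]
        rfl

end ShufflePaper
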